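/- arXiv:2006.05118 — 2 statements merged into one kernel-verified Lean document; each statement's English description precedes it below -/
import Mathlib

section
/- Let N ≥ 1 and let G = (g_1,...,g_N) : [0,1]^N → ℝ^N be continuous. Assume: (a) for each j, g_j(x) = 0 whenever x_j = 0; (b) for each j, g_j(x) > 0 whenever x_j ≠ 0; (c) G is order-preserving, i.e. G(x) ≥ G(y) componentwise whenever x ≥ y componentwise in [0,1]^N. Then there exists η* > 0 such that the cube [0,η*]^N is contained in the image G([0,1]^N). -/
/-!
With `η = min_j G_j(e_j)`, a target `c ∈ [0, η]^N` satisfies `G_j ≤ c_j` on the face `x_j = 0`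
(where `G_j = 0`) and `c_j ≤ G_j` on the face `x_j = 1` (where `G ≥ G(e_j)` by monotonicity), so
`c` is attained by the Poincaré–Miranda theorem.

Poincaré–Miranda is reduced to Kuhn's combinatorial lemma. Label a vertex `v` of Freudenthal's
triangulation of the grid `{0, …, M}^n` by `j + 1` for some `j` with `v_j > 0` and
`G_j(v / M) ≥ c_j`, or by `0` if there is no such `j`. Some simplex carries all labels
`0, …, n`; on it every `G_j - c_j` changes sign, so for fine grids its vertices are approximate
solutions, and compactness gives an exact one. Kuhn's lemma (an odd number of fully labelled
simplices) is the door-to-door parity argument: facets labelled `0, …, n - 1` are paired up by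
crossing into the neighbouring simplex, except those lying in the face `x_n = 0`, which are the
fully labelled simplices one dimension down.
-/

namespace Finset

theorem even_card_of_involution {α : Type*} {s : Finset α} (f : α → α)
    (hmem : ∀ a ∈ s, f a ∈ s) (hinv : ∀ a ∈ s, f (f a) = a) (hne : ∀ a ∈ s, f a ≠ a) :
    Even #s := by
  rw [← ZMod.natCast_eq_zero_iff_even, card_eq_sum_ones, Nat.cast_sum, Nat.cast_one]
  exact sum_involution (fun a _ => f a) (fun _ _ => by decide) (fun a ha _ => hne a ha) hmem hinv

end Finset

namespace Freudenthal

open Finset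

section Doors

variable {n : ℕ} (L : Fin (n + 1) → ℕ)

lemma card_doors_of_forall_exists (hL : ∀ k, L k ≤ n) (hfull : ∀ m ≤ n, ∃ k, L k = m) :
    #{k | ∀ m < n, ∃ i ≠ k, L i = m} = 1 := by
  have hinj : Function.Injective L := by
    let L' : Fin (n + 1) → Fin (n + 1) := fun k => ⟨L k, Nat.lt_succ_of_le (hL k)⟩
    have hL' : L'.Surjective := fun m =>
      (hfull m (Nat.le_of_lt_succ m.2)).imp fun k hk => Fin.ext hk
    exact fun a b h => Finite.injective_iff_surjective.2 hL' (Fin.ext h)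
  obtain ⟨k₀, hk₀⟩ := hfull n le_rfl
  refine card_eq_one.2 ⟨k₀, eq_singleton_iff_unique_mem.2
    ⟨mem_filter.2 ⟨mem_univ _, fun m hm => ?_⟩, fun k hk => ?_⟩⟩
  · obtain ⟨i, hi⟩ := hfull m hm.le
    exact ⟨i, by rintro rfl; omega, hi⟩
  · by_contra hne
    obtain ⟨i, hik, hi⟩ := (mem_filter.1 hk).2 (L k)
      ((hL k).lt_of_ne fun h => hne (hinj (h.trans hk₀.symm)))
    exact hik (hinj hi)

lemma card_doors_of_forall_lt (hLn : ∀ k, L k < n) (hlow : ∀ m < n, ∃ k, L k = m) :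
    #{k | ∀ m < n, ∃ i ≠ k, L i = m} = 2 := by
  -- `n + 1` vertices carry the `n` labels `0, …, n - 1`, so exactly one label is doubled.
  obtain ⟨i, i', hii', hLi⟩ := Fintype.exists_ne_map_eq_of_card_lt
    (fun k => (⟨L k, hLn k⟩ : Fin n)) (by simp)
  replace hLi : L i = L i' := congrArg Fin.val hLi
  have hdoor_of_twin : ∀ k, ∀ k' ≠ k, L k' = L k → ∀ m < n, ∃ j ≠ k, L j = m := by
    intro k k' hk'k hk' m hm
    obtain ⟨j, hj⟩ := hlow m hm
    by_cases hjk : j = k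
    · exact ⟨k', hk'k, hk'.trans (hjk ▸ hj)⟩
    · exact ⟨j, hjk, hj⟩
  have hinj : Set.InjOn L (univ.erase i' : Finset _) := by
    rw [← card_image_iff, card_erase_of_mem (mem_univ _), card_univ, Fintype.card_fin,
      add_tsub_cancel_right]
    refine le_antisymm ((card_le_card fun m hm => ?_).trans (card_range n).le)
      ((card_range n).symm.le.trans (card_le_card fun m hm => ?_))
    · obtain ⟨k, -, rfl⟩ := mem_image.1 hm
      exact mem_range.2 (hLn k)
    · obtain ⟨j, hji', hj⟩ := hdoor_of_twin i' i hii' hLi m (mem_range.1 hm)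
      exact mem_image.2 ⟨j, by simpa using hji', hj⟩
  refine card_eq_two.2 ⟨i, i', hii', ?_⟩
  ext k
  simp only [mem_filter, mem_univ, true_and, mem_insert, mem_singleton]
  constructor
  · intro hk
    by_contra! hki
    obtain ⟨j, hjk, hj⟩ := hk (L k) (hLn k)
    have hk_mem : k ∈ (univ.erase i' : Finset _) := by simp [hki.2]
    by_cases hji : j = i'
    · exact hki.1 (hinj hk_mem (by simp [hii']) (hj.symm.trans (hji ▸ hLi.symm)))
    · exact hjk (hinj (by simp [hji]) hk_mem hj)
  · rintro (rfl | rfl)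
    · exact hdoor_of_twin k i' hii'.symm hLi.symm
    · exact hdoor_of_twin k i hii' hLi

theorem odd_card_doors_iff (hL : ∀ k, L k ≤ n) :
    Odd #{k | ∀ m < n, ∃ i ≠ k, L i = m} ↔ ∀ m ≤ n, ∃ k, L k = m := by
  by_cases hfull : ∀ m ≤ n, ∃ k, L k = m
  · refine iff_of_true ?_ hfull
    rw [card_doors_of_forall_exists L hL hfull]
    exact odd_one
  refine iff_of_false (Nat.not_odd_iff_even.2 ?_) hfull
  by_cases hlow : ∀ m < n, ∃ k, L k = m
  · have hLn (k) : L k < n := (hL k).lt_of_ne fun h =>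
      hfull fun m hm => hm.lt_or_eq.elim (hlow m) fun e => ⟨k, h.trans e.symm⟩
    rw [card_doors_of_forall_lt L hLn hlow]
    exact even_two
  push Not at hlow
  obtain ⟨m, hm, hmL⟩ := hlow
  rw [filter_eq_empty_iff.2 fun k _ hk => ?_, card_empty]
  · exact .zero
  obtain ⟨i, -, hi⟩ := hk m hm
  exact hmL i hi

end Doors

/-- A simplex `(p, π)` of Freudenthal's triangulation of `[0, M]^n`: its vertex `k` is
`p + e_{π 0} + ⋯ + e_{π (k - 1)}`. -/
abbrev Simplex (n M : ℕ) := (Fin n → Fin M) × Equiv.Perm (Fin n)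

variable {n M : ℕ}

def vertex (S : Simplex n M) (k : Fin (n + 1)) : Fin n → ℕ :=
  fun j => S.1 j + if (S.2.symm j : ℕ) < k then 1 else 0

lemma vertex_perm_apply (S : Simplex n M) (k : Fin (n + 1)) (a : Fin n) :
    vertex S k (S.2 a) = S.1 (S.2 a) + if (a : ℕ) < k then 1 else 0 := by
  simp [vertex]

lemma vertex_apply_eq_or (S : Simplex n M) (k : Fin (n + 1)) (j : Fin n) :
    vertex S k j = S.1 j ∨ vertex S k j = S.1 j + 1 := by
  unfold vertex; split_ifs <;> simp

def swapSteps (S : Simplex (n + 1) M) (a : Fin n) : Simplex (n + 1) M :=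
  (S.1, (Equiv.swap a.castSucc a.succ).trans S.2)

def stepUp (S : Simplex (n + 1) M) (h : (S.1 (S.2 0) : ℕ) + 1 < M) : Simplex (n + 1) M :=
  (Function.update S.1 (S.2 0) ⟨_, h⟩, (finRotate (n + 1)).trans S.2)

def stepDown (S : Simplex (n + 1) M) : Simplex (n + 1) M :=
  (Function.update S.1 (S.2 (Fin.last n))
    ⟨(S.1 (S.2 (Fin.last n)) : ℕ) - 1, (Nat.sub_le _ 1).trans_lt (S.1 _).2⟩,
    (finRotate (n + 1)).symm.trans S.2)

lemma vertex_swapSteps (S : Simplex (n + 1) M) (a : Fin n) {i : Fin (n + 2)}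
    (hi : i ≠ a.succ.castSucc) : vertex (swapSteps S a) i = vertex S i := by
  have hi' : (i : ℕ) ≠ a + 1 := fun h => hi (Fin.ext (by simpa using h))
  funext j
  obtain ⟨b, rfl⟩ := S.2.surjective j
  simp only [vertex, swapSteps, Equiv.symm_trans_apply, Equiv.symm_apply_apply, Equiv.symm_swap,
    Equiv.swap_apply_def]
  split_ifs <;> simp_all [Fin.ext_iff] <;> omega

lemma vertex_stepUp (S : Simplex (n + 1) M) (h : (S.1 (S.2 0) : ℕ) + 1 < M) (i : Fin (n + 1)) :
    vertex (stepUp S h) i.castSucc = vertex S i.succ := by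
  funext j
  obtain ⟨b, rfl⟩ := ((finRotate (n + 1)).trans S.2).surjective j
  have := vertex_perm_apply (stepUp S h) i.castSucc b
  simp only [stepUp] at this ⊢
  rw [this, Equiv.trans_apply, vertex_perm_apply]
  rcases eq_or_ne b (Fin.last n) with rfl | hb
  · simp; omega
  · have hne : finRotate (n + 1) b ≠ 0 :=
      finRotate_last (n := n) ▸ (finRotate _).injective.ne hb
    rw [Function.update_of_ne (S.2.injective.ne hne), coe_finRotate_of_ne_last hb]
    simp

lemma vertex_stepDown (S : Simplex (n + 1) M) (h : 0 < (S.1 (S.2 (Fin.last n)) : ℕ))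
    (i : Fin (n + 1)) : vertex (stepDown S) i.succ = vertex S i.castSucc := by
  funext j
  obtain ⟨c, rfl⟩ := S.2.surjective j
  have := vertex_perm_apply (stepDown S) i.succ (finRotate (n + 1) c)
  simp only [stepDown, Equiv.trans_apply, Equiv.symm_apply_apply] at this ⊢
  rw [this, vertex_perm_apply]
  rcases eq_or_ne c (Fin.last n) with rfl | hc
  · simp only [Function.update_self, finRotate_last, Fin.val_zero, Fin.val_succ, Fin.val_last,
      Fin.val_castSucc]
    split_ifs <;> omega
  · rw [Function.update_of_ne (S.2.injective.ne hc), coe_finRotate_of_ne_last hc]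
    simp

lemma swapSteps_swapSteps (S : Simplex (n + 1) M) (a : Fin n) :
    swapSteps (swapSteps S a) a = S := by
  ext <;> simp [swapSteps]

lemma stepDown_stepUp (S : Simplex (n + 1) M) (h : (S.1 (S.2 0) : ℕ) + 1 < M) :
    stepDown (stepUp S h) = S := by
  have hπ : ((finRotate (n + 1)).trans S.2) (Fin.last n) = S.2 0 := by simp
  ext j : 2
  · simp only [stepDown, stepUp, hπ, Function.update_idem]
    rcases eq_or_ne j (S.2 0) with rfl | hj
    · simp
    · simp [Function.update_of_ne hj]
  · simp [stepDown, stepUp]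

lemma stepUp_stepDown (S : Simplex (n + 1) M) (h : 0 < (S.1 (S.2 (Fin.last n)) : ℕ))
    (h' : ((stepDown S).1 ((stepDown S).2 0) : ℕ) + 1 < M) :
    stepUp (stepDown S) h' = S := by
  have hπ : ((finRotate (n + 1)).symm.trans S.2) 0 = S.2 (Fin.last n) := by
    rw [Equiv.trans_apply, (Equiv.symm_apply_eq _).2 finRotate_last.symm]
  ext j : 2
  · simp only [stepDown, stepUp, hπ, Function.update_idem]
    rcases eq_or_ne j (S.2 (Fin.last n)) with rfl | hj
    · ext; simp; omega
    · simp [Function.update_of_ne hj]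
  · simp [stepDown, stepUp]

/-- The simplex on the other side of the facet opposite vertex `k`, together with the index of its
vertex opposite that facet; a facet on the boundary of the cube is left fixed. -/
def pivot (S : Simplex (n + 1) M) : Fin (n + 2) → Simplex (n + 1) M × Fin (n + 2) :=
  Fin.lastCases
    (if 0 < (S.1 (S.2 (Fin.last n)) : ℕ) then (stepDown S, 0) else (S, Fin.last _))
    (Fin.cases
      (if h : (S.1 (S.2 0) : ℕ) + 1 < M then (stepUp S h, Fin.last _) else (S, 0))
      (fun a => (swapSteps S a, a.succ.castSucc)))

lemma pivot_zero (S : Simplex (n + 1) M) :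
    pivot S 0 = if h : (S.1 (S.2 0) : ℕ) + 1 < M then (stepUp S h, Fin.last _) else (S, 0) := by
  rw [← Fin.castSucc_zero, pivot, Fin.lastCases_castSucc, Fin.cases_zero, Fin.castSucc_zero]

lemma pivot_last (S : Simplex (n + 1) M) :
    pivot S (Fin.last _) =
      if 0 < (S.1 (S.2 (Fin.last n)) : ℕ) then (stepDown S, 0) else (S, Fin.last _) :=
  Fin.lastCases_last

lemma pivot_castSucc_succ (S : Simplex (n + 1) M) (a : Fin n) :
    pivot S a.succ.castSucc = (swapSteps S a, a.succ.castSucc) := by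
  rw [pivot, Fin.lastCases_castSucc, Fin.cases_succ]

lemma pivot_pivot (S : Simplex (n + 1) M) (k : Fin (n + 2)) :
    pivot (pivot S k).1 (pivot S k).2 = (S, k) := by
  induction k using Fin.lastCases with
  | last =>
    rw [pivot_last]
    split_ifs with h
    · have h' : ((stepDown S).1 ((stepDown S).2 0) : ℕ) + 1 < M := by
        simp [stepDown, (Equiv.symm_apply_eq _).2 finRotate_last.symm]
        omega
      rw [pivot_zero, dif_pos h', stepUp_stepDown S h]
    · rw [pivot_last, if_neg h]
  | cast k =>
    induction k using Fin.cases with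
    | zero =>
      rw [Fin.castSucc_zero, pivot_zero]
      split_ifs with h
      · have h' : 0 < ((stepUp S h).1 ((stepUp S h).2 (Fin.last n)) : ℕ) := by simp [stepUp]
        rw [pivot_last, if_pos h', stepDown_stepUp]
      · rw [pivot_zero, dif_neg h]
    | succ a => rw [pivot_castSucc_succ, pivot_castSucc_succ, swapSteps_swapSteps]

open scoped Classical

section Labelling

variable (label : (Fin n → ℕ) → ℕ)

def IsFullyLabelled (S : Simplex n M) : Prop :=
  ∀ m ≤ n, ∃ k, label (vertex S k) = m

def IsDoor (S : Simplex n M) (k : Fin (n + 1)) : Prop :=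
  ∀ m < n, ∃ i ≠ k, label (vertex S i) = m

lemma odd_card_isDoor_iff (hle : ∀ v, label v ≤ n) (S : Simplex n M) :
    Odd #{k | IsDoor label S k} ↔ IsFullyLabelled label S := by
  convert odd_card_doors_iff (fun k => label (vertex S k)) fun _ => hle _ <;> rfl

end Labelling

section Pivot

variable (label : (Fin (n + 1) → ℕ) → ℕ) {S : Simplex (n + 1) M}

/-- The facet opposite the last vertex lies in the face `x_{π n} = 0`: the only boundary facets
that a door can occupy. -/
def IsBottomFacet (S : Simplex (n + 1) M) (k : Fin (n + 2)) : Prop :=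
  k = Fin.last _ ∧ (S.1 (S.2 (Fin.last n)) : ℕ) = 0

lemma IsDoor.base_add_one_lt (hM : ∀ v j, v j = M → label v ≠ 0) (hd : IsDoor label S 0) :
    (S.1 (S.2 0) : ℕ) + 1 < M := by
  obtain ⟨i, hi0, hi⟩ := hd 0 n.succ_pos
  have hv : vertex S i (S.2 0) = S.1 (S.2 0) + 1 := by
    rw [vertex_perm_apply, if_pos]
    exact Fin.pos_iff_ne_zero.2 hi0
  by_contra hge
  exact hM _ _ (by rw [hv]; have := (S.1 (S.2 0)).2; omega) hi

lemma isDoor_stepUp (hd : IsDoor label S 0) (h : (S.1 (S.2 0) : ℕ) + 1 < M) :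
    IsDoor label (stepUp S h) (Fin.last _) := by
  intro m hm
  obtain ⟨i, hi0, hi⟩ := hd m hm
  obtain ⟨i, rfl⟩ := Fin.exists_succ_eq.2 hi0
  exact ⟨i.castSucc, Fin.castSucc_ne_last i, by rwa [vertex_stepUp]⟩

lemma isDoor_stepDown (hd : IsDoor label S (Fin.last _)) (h : 0 < (S.1 (S.2 (Fin.last n)) : ℕ)) :
    IsDoor label (stepDown S) 0 := by
  intro m hm
  obtain ⟨i, hi0, hi⟩ := hd m hm
  obtain ⟨i, rfl⟩ := Fin.exists_castSucc_eq.2 hi0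
  exact ⟨i.succ, Fin.succ_ne_zero i, by rwa [vertex_stepDown S h]⟩

lemma isDoor_swapSteps {a : Fin n} (hd : IsDoor label S a.succ.castSucc) :
    IsDoor label (swapSteps S a) a.succ.castSucc := by
  intro m hm
  obtain ⟨i, hik, hi⟩ := hd m hm
  exact ⟨i, hik, by rwa [vertex_swapSteps S a hik]⟩

lemma isDoor_pivot_and_ne (hM : ∀ v j, v j = M → label v ≠ 0) {k : Fin (n + 2)}
    (hd : IsDoor label S k) (hb : ¬IsBottomFacet S k) :
    IsDoor label (pivot S k).1 (pivot S k).2 ∧ pivot S k ≠ (S, k) := by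
  induction k using Fin.lastCases with
  | last =>
    have h : 0 < (S.1 (S.2 (Fin.last n)) : ℕ) := Nat.pos_of_ne_zero fun h => hb ⟨rfl, h⟩
    rw [pivot_last, if_pos h]
    exact ⟨isDoor_stepDown label hd h, fun he => Fin.last_pos'.ne' (congrArg Prod.snd he).symm⟩
  | cast k =>
    induction k using Fin.cases with
    | zero =>
      rw [Fin.castSucc_zero] at hd ⊢
      have h := hd.base_add_one_lt label hM
      rw [pivot_zero, dif_pos h]
      exact ⟨isDoor_stepUp label hd h, fun he => Fin.last_pos'.ne' (congrArg Prod.snd he)⟩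
    | succ a =>
      rw [pivot_castSucc_succ]
      refine ⟨isDoor_swapSteps label hd, fun he => ?_⟩
      have := congrArg (fun z => z.1.2.symm (S.2 a.castSucc)) he
      simp [swapSteps, Fin.ext_iff] at this

lemma not_isBottomFacet_pivot {k : Fin (n + 2)} (hb : ¬IsBottomFacet S k) :
    ¬IsBottomFacet (pivot S k).1 (pivot S k).2 := by
  induction k using Fin.lastCases with
  | last =>
    rw [pivot_last]
    split_ifs
    · exact fun h => Fin.last_pos'.ne' h.1.symm
    · exact hb
  | cast k =>
    induction k using Fin.cases with
    | zero =>
      rw [Fin.castSucc_zero, pivot_zero]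
      split_ifs
      · simp [IsBottomFacet, stepUp]
      · simpa using hb
    | succ a =>
      rw [pivot_castSucc_succ]
      exact fun h => Fin.castSucc_ne_last _ h.1

lemma IsDoor.perm_last_eq (h0 : ∀ v (j : Fin (n + 1)), v j = 0 → label v ≠ j + 1)
    (hd : IsDoor label S (Fin.last _)) (hp : (S.1 (S.2 (Fin.last n)) : ℕ) = 0) :
    S.2 (Fin.last n) = Fin.last n := by
  -- Coordinate `π n` vanishes on the facet, so its label `π n + 1` is missing there.
  by_contra hne
  have hlt : (S.2 (Fin.last n) : ℕ) < n := Fin.val_lt_last hne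
  obtain ⟨i, hi, hil⟩ := hd _ (Nat.succ_lt_succ hlt)
  refine h0 _ _ ?_ hil
  rw [vertex_perm_apply, hp, if_neg]
  simpa using Fin.val_lt_last hi

lemma even_card_isDoor_not_isBottomFacet (hM : ∀ v j, v j = M → label v ≠ 0) :
    Even #{z : Simplex (n + 1) M × Fin (n + 2) |
      IsDoor label z.1 z.2 ∧ ¬IsBottomFacet z.1 z.2} := by
  refine even_card_of_involution (fun z => pivot z.1 z.2) (fun z hz => ?_)
    (fun z _ => pivot_pivot z.1 z.2) (fun z hz => ?_) <;>
  simp only [mem_filter, mem_univ, true_and] at hz ⊢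
  · exact ⟨(isDoor_pivot_and_ne label hM hz.1 hz.2).1, not_isBottomFacet_pivot hz.2⟩
  · exact (isDoor_pivot_and_ne label hM hz.1 hz.2).2

end Pivot

section Face

variable [NeZero M]

def lift (T : Simplex n M) : Simplex (n + 1) M :=
  (Fin.snoc T.1 0, finSuccEquivLast.symm.permCongr T.2.optionCongr)

lemma lift_perm_castSucc (T : Simplex n M) (j : Fin n) :
    (lift T).2 j.castSucc = (T.2 j).castSucc := by
  simp [lift, Equiv.permCongr_apply, finSuccEquivLast_symm_some]

lemma lift_perm_last (T : Simplex n M) : (lift T).2 (Fin.last n) = Fin.last n := by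
  simp [lift, Equiv.permCongr_apply]

lemma vertex_lift_castSucc (T : Simplex n M) (i : Fin (n + 1)) :
    vertex (lift T) i.castSucc = Fin.snoc (vertex T i) 0 := by
  funext j
  induction j using Fin.lastCases with
  | last =>
    have := vertex_perm_apply (lift T) i.castSucc (Fin.last n)
    rw [lift_perm_last] at this
    rw [this, Fin.snoc_last, if_neg (by simp; omega)]
    simp [lift]
  | cast j =>
    obtain ⟨b, rfl⟩ := T.2.surjective j
    have := vertex_perm_apply (lift T) i.castSucc b.castSucc
    rw [lift_perm_castSucc] at this
    rw [this, Fin.snoc_castSucc, vertex_perm_apply]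
    simp [lift]

lemma lift_injective : Function.Injective (lift : Simplex n M → Simplex (n + 1) M) := by
  intro T T' h
  simp only [lift, Prod.mk.injEq] at h
  exact Prod.ext (Fin.snoc_injective2 h.1).1
    (Equiv.optionCongr_injective (finSuccEquivLast.symm.permCongr.injective h.2))

lemma exists_lift_eq {S : Simplex (n + 1) M} (hπ : S.2 (Fin.last n) = Fin.last n)
    (hp : (S.1 (Fin.last n) : ℕ) = 0) : ∃ T, lift T = S := by
  let σ := finSuccEquivLast.permCongr S.2
  have hσ : σ none = none := by simp [σ, Equiv.permCongr_apply, hπ]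
  refine ⟨(Fin.init S.1, Equiv.removeNone σ), Prod.ext ?_ ?_⟩
  · have : S.1 (Fin.last n) = 0 := Fin.ext hp
    simp [lift, ← this]
  · ext x
    simp [lift, map_equiv_removeNone, hσ, σ, Equiv.permCongr_apply]

variable (label : (Fin (n + 1) → ℕ) → ℕ)

lemma isDoor_lift_last_iff (T : Simplex n M) :
    IsDoor label (lift T) (Fin.last _) ↔ IsFullyLabelled (fun w => label (Fin.snoc w 0)) T := by
  constructor
  · intro hd m hm
    obtain ⟨i, hi, him⟩ := hd m (Nat.lt_succ_of_le hm)
    obtain ⟨i, rfl⟩ := Fin.exists_castSucc_eq.2 hi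
    exact ⟨i, by rwa [vertex_lift_castSucc] at him⟩
  · intro hT m hm
    obtain ⟨i, him⟩ := hT m (Nat.le_of_lt_succ hm)
    exact ⟨i.castSucc, Fin.castSucc_ne_last i, by rwa [vertex_lift_castSucc]⟩

lemma card_isDoor_isBottomFacet (h0 : ∀ v (j : Fin (n + 1)), v j = 0 → label v ≠ j + 1) :
    #{z : Simplex (n + 1) M × Fin (n + 2) | IsDoor label z.1 z.2 ∧ IsBottomFacet z.1 z.2} =
      #{T : Simplex n M | IsFullyLabelled (fun w => label (Fin.snoc w 0)) T} := by
  refine (card_nbij (fun T => (lift T, Fin.last _)) (fun T hT => ?_)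
    (fun T _ T' _ h => lift_injective (congrArg Prod.fst h)) fun z hz => ?_).symm
  · simp only [coe_filter, mem_univ, true_and, Set.mem_ofPred_eq] at hT ⊢
    refine ⟨(isDoor_lift_last_iff label T).2 hT, rfl, ?_⟩
    simp [lift]
  · obtain ⟨S, k⟩ := z
    simp only [coe_filter, mem_univ, true_and, Set.mem_ofPred_eq] at hz ⊢
    obtain ⟨hd, rfl, hp⟩ := hz
    have hπ := hd.perm_last_eq label h0 hp
    obtain ⟨T, rfl⟩ := exists_lift_eq hπ (hπ ▸ hp)
    exact ⟨T, (isDoor_lift_last_iff label T).1 hd, rfl⟩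

end Face

lemma card_isFullyLabelled_eq_card_isDoor_mod_two {label : (Fin n → ℕ) → ℕ}
    (hle : ∀ v, label v ≤ n) :
    (#{S : Simplex n M | IsFullyLabelled label S} : ZMod 2) =
      #{z : Simplex n M × Fin (n + 1) | IsDoor label z.1 z.2} := by
  rw [card_filter, card_filter, Fintype.sum_prod_type (α₁ := Simplex n M), Nat.cast_sum,
    Nat.cast_sum]
  refine sum_congr rfl fun S _ => ?_
  rw [← card_filter]
  split_ifs with hS
  · exact (ZMod.natCast_eq_one_iff_odd.2 ((odd_card_isDoor_iff label hle S).2 hS)).symm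
  · exact (ZMod.natCast_eq_zero_iff_even.2 (Nat.not_odd_iff_even.1
      (mt (odd_card_isDoor_iff label hle S).1 hS))).symm

theorem odd_card_isFullyLabelled [NeZero M] (label : (Fin n → ℕ) → ℕ)
    (hle : ∀ v, label v ≤ n) (h0 : ∀ v (j : Fin n), v j = 0 → label v ≠ j + 1)
    (hM : ∀ v j, v j = M → label v ≠ 0) :
    Odd #{S : Simplex n M | IsFullyLabelled label S} := by
  induction n with
  | zero =>
    have hfull (S : Simplex 0 M) : IsFullyLabelled label S := fun m hm =>
      ⟨0, by have := hle (vertex S 0); omega⟩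
    rw [filter_true_of_mem fun S _ => hfull S, card_univ]
    simp
  | succ n ih =>
    have hface := ih (fun w => label (Fin.snoc w 0))
      (fun w => Nat.le_of_lt_succ ((hle _).lt_of_ne (h0 _ (Fin.last n) (Fin.snoc_last _ _))))
      (fun w j hj => by simpa using h0 (Fin.snoc w 0) j.castSucc (by simpa using hj))
      (fun w j hj => hM (Fin.snoc w 0) j.castSucc (by simpa using hj))
    rw [← ZMod.natCast_eq_one_iff_odd, card_isFullyLabelled_eq_card_isDoor_mod_two hle,
      ← card_filter_add_card_filter_not fun z => IsBottomFacet z.1 z.2, filter_filter,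
      filter_filter, card_isDoor_isBottomFacet label h0, Nat.cast_add,
      ZMod.natCast_eq_one_iff_odd.2 hface,
      ZMod.natCast_eq_zero_iff_even.2 (even_card_isDoor_not_isBottomFacet label hM), add_zero]

theorem exists_simplex_forall_sign_change [NeZero M] (σ : Fin n → (Fin n → ℕ) → Prop)
    (hbot : ∀ v j, v j = 0 → ¬σ j v) (htop : ∀ v j, v j = M → σ j v) :
    ∃ S : Simplex n M, ∀ j, (∃ k, ¬σ j (vertex S k)) ∧ ∃ k, σ j (vertex S k) := by
  let label : (Fin n → ℕ) → ℕ := fun v => if h : ∃ j, σ j v then h.choose + 1 else 0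
  have label_eq_succ (v) (j : Fin n) (hv : label v = j + 1) : σ j v := by
    simp only [label] at hv
    split_ifs at hv with h
    exact Fin.ext (Nat.succ_injective hv) ▸ h.choose_spec
  have label_eq_zero (v j) (hv : label v = 0) : ¬σ j v := fun hσ => by
    simp only [label, dif_pos (⟨j, hσ⟩ : ∃ j, σ j v)] at hv
    omega
  have hle (v) : label v ≤ n := by
    simp only [label]
    split_ifs with h
    exacts [h.choose.2, n.zero_le]
  obtain ⟨S, hS⟩ := card_pos.1 (odd_card_isFullyLabelled label hle
    (fun v j hv hl => hbot v j hv (label_eq_succ v j hl))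
    (fun v j hv hl => label_eq_zero v j hl (htop v j hv))).pos
  refine ⟨S, fun j => ⟨?_, ?_⟩⟩
  · obtain ⟨k, hk⟩ := (mem_filter.1 hS).2 0 n.zero_le
    exact ⟨k, label_eq_zero _ j hk⟩
  · obtain ⟨k, hk⟩ := (mem_filter.1 hS).2 (j + 1) j.2
    exact ⟨k, label_eq_succ _ j hk⟩

end Freudenthal

open Set Freudenthal

-- Clamped so that every `v` lands in the cube.
noncomputable def gridPoint {n : ℕ} (M : ℕ) (v : Fin n → ℕ) : Fin n → ℝ :=
  fun i => (min (v i) M : ℕ) / M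

section GridPoint

variable {n M : ℕ}

lemma gridPoint_mem_Icc (v : Fin n → ℕ) : gridPoint M v ∈ Icc 0 1 :=
  ⟨fun i => by simp only [gridPoint]; positivity,
    fun i => div_le_one_of_le₀ (Nat.cast_le.2 (min_le_right _ _)) M.cast_nonneg⟩

lemma gridPoint_apply_of_eq_zero {v : Fin n → ℕ} {j : Fin n} (hv : v j = 0) :
    gridPoint M v j = 0 := by
  simp [gridPoint, hv]

lemma gridPoint_apply_of_eq [NeZero M] {v : Fin n → ℕ} {j : Fin n} (hv : v j = M) :
    gridPoint M v j = 1 := by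
  simp [gridPoint, hv, NeZero.ne M]

lemma dist_gridPoint_vertex_le (S : Simplex n M) (k k' : Fin (n + 1)) :
    dist (gridPoint M (vertex S k)) (gridPoint M (vertex S k')) ≤ 1 / M := by
  refine (dist_pi_le_iff (by positivity)).2 fun i => ?_
  have hp := (S.1 i).2
  have hmin (l) : min (vertex S l i) M = vertex S l i :=
    min_eq_left ((vertex_apply_eq_or S l i).elim (·.le.trans (by omega)) (·.le.trans hp))
  simp only [gridPoint, hmin, Real.dist_eq, ← sub_div, abs_div, Nat.abs_cast]
  gcongr
  rw [abs_sub_le_iff]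
  rcases vertex_apply_eq_or S k i with h | h <;> rcases vertex_apply_eq_or S k' i with h' | h' <;>
    simp only [h, h'] <;> push_cast <;> constructor <;> linarith

end GridPoint

section PoincareMiranda

variable {n : ℕ} {G : (Fin n → ℝ) → Fin n → ℝ} {c : Fin n → ℝ}

lemma exists_dist_le_of_faces (hG : ContinuousOn G (Icc 0 1))
    (hbot : ∀ x ∈ Icc (0 : Fin n → ℝ) 1, ∀ j, x j = 0 → G x j ≤ c j)
    (htop : ∀ x ∈ Icc (0 : Fin n → ℝ) 1, ∀ j, x j = 1 → c j ≤ G x j) {ε : ℝ}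
    (hε : 0 < ε) : ∃ x ∈ Icc (0 : Fin n → ℝ) 1, dist (G x) c ≤ ε := by
  obtain ⟨δ, hδ, hGδ⟩ := Metric.uniformContinuousOn_iff_le.1
    (isCompact_Icc.uniformContinuousOn_of_continuous hG) ε hε
  obtain ⟨m, hm⟩ := exists_nat_one_div_lt hδ
  -- The face `v j = 0` is declared negative, so that only `G x j ≤ c j` is needed there.
  obtain ⟨S, hS⟩ := exists_simplex_forall_sign_change (M := m + 1)
    (fun j v => 0 < v j ∧ c j ≤ G (gridPoint (m + 1) v) j)
    (fun v j hv h => h.1.ne' hv)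
    (fun v j hv => ⟨by omega, htop _ (gridPoint_mem_Icc v) j (gridPoint_apply_of_eq hv)⟩)
  set x := gridPoint (m + 1) (vertex S 0)
  have hclose (k) : dist (G (gridPoint (m + 1) (vertex S k))) (G x) ≤ ε :=
    hGδ _ (gridPoint_mem_Icc _) _ (gridPoint_mem_Icc _)
      ((dist_gridPoint_vertex_le S k 0).trans (by exact_mod_cast hm.le))
  refine ⟨x, gridPoint_mem_Icc _, (dist_pi_le_iff hε.le).2 fun j => ?_⟩
  obtain ⟨⟨k, hk⟩, k', hk'⟩ := hS j
  have hlow : G (gridPoint (m + 1) (vertex S k)) j ≤ c j := by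
    by_cases hv : vertex S k j = 0
    · exact hbot _ (gridPoint_mem_Icc _) j (gridPoint_apply_of_eq_zero hv)
    · exact (not_le.1 fun h => hk ⟨Nat.pos_of_ne_zero hv, h⟩).le
  have h := (dist_le_pi_dist _ _ j).trans (hclose k)
  have h' := (dist_le_pi_dist _ _ j).trans (hclose k')
  rw [Real.dist_eq, abs_le] at h h' ⊢
  constructor <;> linarith [hk'.2]

theorem poincare_miranda (hG : ContinuousOn G (Icc 0 1))
    (hbot : ∀ x ∈ Icc (0 : Fin n → ℝ) 1, ∀ j, x j = 0 → G x j ≤ c j)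
    (htop : ∀ x ∈ Icc (0 : Fin n → ℝ) 1, ∀ j, x j = 1 → c j ≤ G x j) :
    c ∈ G '' Icc 0 1 := by
  refine (isCompact_Icc.image_of_continuousOn hG).isClosed.closure_subset
    (Metric.mem_closure_iff.2 fun ε hε => ?_)
  obtain ⟨x, hx, hxc⟩ := exists_dist_le_of_faces hG hbot htop (half_pos hε)
  exact ⟨G x, mem_image_of_mem G hx, by rw [dist_comm]; linarith⟩

end PoincareMiranda

theorem intermediate_mean_value_general (N : ℕ)
    (G : (Fin N → ℝ) → (Fin N → ℝ))
    (hcont : ContinuousOn G (Set.Icc 0 1))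
    (ha : ∀ x ∈ Set.Icc (0 : Fin N → ℝ) 1, ∀ j, x j = 0 → G x j = 0)
    (hb : ∀ x ∈ Set.Icc (0 : Fin N → ℝ) 1, ∀ j, x j ≠ 0 → 0 < G x j)
    (hmono : ∀ x ∈ Set.Icc (0 : Fin N → ℝ) 1, ∀ y ∈ Set.Icc (0 : Fin N → ℝ) 1,
      y ≤ x → G y ≤ G x) :
    ∃ η : ℝ, 0 < η ∧
      Set.Icc (0 : Fin N → ℝ) (fun _ => η) ⊆ G '' Set.Icc 0 1 := by
  have he (j : Fin N) : (Pi.single j 1 : Fin N → ℝ) ∈ Icc 0 1 :=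
    ⟨Pi.single_nonneg.2 zero_le_one, fun i => by
      rcases eq_or_ne i j with rfl | hi <;> simp [*]⟩
  obtain ⟨η, hη, hηG⟩ : ∃ η : ℝ, 0 < η ∧ ∀ j, η ≤ G (Pi.single j 1) j := by
    have hηj (j) : ∀ᶠ η in nhds (0 : ℝ), η ≤ G (Pi.single j 1) j :=
      eventually_le_nhds (hb _ (he j) j (by simp))
    exact ((eventually_mem_nhdsWithin (a := (0 : ℝ)) (s := Ioi 0)).and <|
      Filter.eventually_all.2 fun j => eventually_nhdsWithin_of_eventually_nhds (hηj j)).exists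
  refine ⟨η, hη, fun c hc => poincare_miranda hcont (fun x hx j hxj => ?_) fun x hx j hxj => ?_⟩
  · exact (ha x hx j hxj).trans_le (hc.1 j)
  · have hle : Pi.single j 1 ≤ x := fun i => by
      rcases eq_or_ne i j with rfl | hi
      · simp [hxj]
      · simpa [hi] using hx.1 i
    exact (hc.2 j).trans ((hηG j).trans (hmono x hx _ (he j) hle j))

/-- Intermediate mean value lemma: if `G : [0,1]^N → ℝ^N` is continuous,
vanishes in its `j`-th component whenever `x_j = 0`, is positive in its `j`-th
component whenever `x_j ≠ 0`, and is order-preserving, then its image contains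
a small cube `[0,η*]^N`. -/
theorem intermediate_mean_value (N : ℕ) (hN : 1 ≤ N)
    (G : (Fin N → ℝ) → (Fin N → ℝ))
    (hcont : ContinuousOn G (Set.Icc 0 1))
    (ha : ∀ x ∈ Set.Icc (0 : Fin N → ℝ) 1, ∀ j, x j = 0 → G x j = 0)
    (hb : ∀ x ∈ Set.Icc (0 : Fin N → ℝ) 1, ∀ j, x j ≠ 0 → 0 < G x j)
    (hmono : ∀ x ∈ Set.Icc (0 : Fin N → ℝ) 1, ∀ y ∈ Set.Icc (0 : Fin N → ℝ) 1,
      y ≤ x → G y ≤ G x) :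
    ∃ η : ℝ, 0 < η ∧
      Set.Icc (0 : Fin N → ℝ) (fun _ => η) ⊆ G '' Set.Icc 0 1 :=
  intermediate_mean_value_general N G hcont ha hb hmono
end

section
/- Let μ > 0, δ_0 > 0, and let f : ℝ → ℝ be C^1 with f(0) = 0 and f'(u) ≤ −μ for all u ∈ [0, δ_0]. If u : ℝ^d → ℝ is a bounded C^2 solution of Δu + f(u) = 0 on ℝ^d satisfying 0 ≤ u ≤ δ_0, then u ≡ 0. -/
/-! For `ε > 0` the bounded function `u - ε ‖· - x₀‖²` attains its maximum at some `z`, where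
every pure second derivative of `u` is at most `2ε`, so `Δu(z) ≤ 2dε`. As `f(s) ≤ -μ s` on
`[0, δ₀]`, the equation gives `μ u(x₀) ≤ μ u(z) ≤ -f(u(z)) = Δu(z) ≤ 2dε`, and `ε → 0` yields
`u(x₀) ≤ 0`. -/

open Filter Set Topology

theorem IsLocalMax.deriv_deriv_nonpos {g : ℝ → ℝ} {x₀ : ℝ} (h : IsLocalMax g x₀)
    (hg : ∀ᶠ x in 𝓝 x₀, DifferentiableAt ℝ g x) : deriv (deriv g) x₀ ≤ 0 := by
  by_contra! hpos
  have hsign := eventually_nhdsWithin_sign_eq_of_deriv_pos hpos h.deriv_eq_zero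
  have hright : ∀ᶠ x in 𝓝 x₀, x₀ < x → 0 < deriv g x :=
    eventually_nhdsWithin_iff.1 (deriv_pos_right_of_sign_deriv (nhdsWithin_le_nhds hsign))
  obtain ⟨r, hr, hball⟩ := Metric.eventually_nhds_iff_ball.1 (hg.and (h.and hright))
  have hmem : ∀ x ∈ Icc x₀ (x₀ + r / 2), x ∈ Metric.ball x₀ r := fun x hx => by
    rw [Metric.mem_ball, Real.dist_eq, abs_lt]; constructor <;> linarith [hx.1, hx.2]
  obtain ⟨ξ, hξ, hslope⟩ := exists_deriv_eq_slope g (by linarith : x₀ < x₀ + r / 2)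
    (fun x hx => (hball x (hmem x hx)).1.continuousAt.continuousWithinAt)
    (fun x hx => (hball x (hmem x (Ioo_subset_Icc_self hx))).1.differentiableWithinAt)
  have hincr : 0 < (g (x₀ + r / 2) - g x₀) / (x₀ + r / 2 - x₀) :=
    hslope ▸ (hball ξ (hmem ξ (Ioo_subset_Icc_self hξ))).2.2 hξ.1
  have hle : g (x₀ + r / 2) ≤ g x₀ := (hball _ (hmem _ ⟨by linarith, le_rfl⟩)).2.1
  have hgrow : 0 < g (x₀ + r / 2) - g x₀ := by
    rwa [div_pos_iff_of_pos_right (by linarith)] at hincr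
  linarith

theorem IsLocalMax.fderiv_fderiv_apply_nonpos {E : Type*} [NormedAddCommGroup E]
    [NormedSpace ℝ E] {φ : E → ℝ} {z : E} (h : IsLocalMax φ z) (v : E)
    (hφ : Differentiable ℝ φ) (hφ' : DifferentiableAt ℝ (fun y => fderiv ℝ φ y v) z) :
    fderiv ℝ (fun y => fderiv ℝ φ y v) z v ≤ 0 := by
  have hline : ∀ t : ℝ, HasDerivAt (fun t => z + t • v) v t := fun t => by
    simpa using ((hasDerivAt_id t).smul_const v).const_add z
  have hderiv : deriv (φ ∘ fun t : ℝ => z + t • v) = fun t => fderiv ℝ φ (z + t • v) v :=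
    funext fun t => ((hφ _).hasFDerivAt.comp_hasDerivAt t (hline t)).deriv
  have hmax : IsLocalMax (φ ∘ fun t : ℝ => z + t • v) 0 :=
    IsLocalMax.comp_continuous (f := φ) (b := (0 : ℝ)) (by simpa using h) (by fun_prop)
  have hsecond_nonpos := hmax.deriv_deriv_nonpos
    (Eventually.of_forall fun t => (hφ _).comp t (hline t).differentiableAt)
  rw [hderiv] at hsecond_nonpos
  have hsecond : HasDerivAt (fun t : ℝ => fderiv ℝ φ (z + t • v) v)
      (fderiv ℝ (fun y => fderiv ℝ φ y v) z v) 0 :=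
    hφ'.hasFDerivAt.comp_hasDerivAt_of_eq (0 : ℝ) (hline 0) (by simp)
  rwa [hsecond.deriv] at hsecond_nonpos

theorem exists_forall_sub_mul_dist_sq_le {X : Type*} [PseudoMetricSpace X] [ProperSpace X]
    {u : X → ℝ} (hu : Continuous u) (hbdd : BddAbove (range u)) {ε : ℝ} (hε : 0 < ε) (x₀ : X) :
    ∃ z, ∀ y, u y - ε * dist y x₀ ^ 2 ≤ u z - ε * dist z x₀ ^ 2 := by
  obtain ⟨M, hM⟩ := hbdd
  have hpenalty : Tendsto (fun y => M - ε * dist y x₀ ^ 2) (cocompact X) atBot :=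
    tendsto_atBot_add_const_left _ M <| tendsto_neg_atTop_atBot.comp <|
      ((tendsto_pow_atTop two_ne_zero).comp
        (tendsto_dist_right_cocompact_atTop x₀)).const_mul_atTop hε
  have : Nonempty X := ⟨x₀⟩
  exact (hu.sub (by fun_prop)).exists_forall_ge <|
    tendsto_atBot_mono (fun y => by simpa using hM (mem_range_self y)) hpenalty

theorem IsLocalMax.fderiv_fderiv_apply_le {F : Type*} [NormedAddCommGroup F]
    [InnerProductSpace ℝ F] {u : F → ℝ} (hu : ContDiff ℝ 2 u) {ε : ℝ} {x₀ z : F}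
    (h : IsLocalMax (fun y => u y - ε * ‖y - x₀‖ ^ 2) z) (v : F) :
    fderiv ℝ (fun y => fderiv ℝ u y v) z v ≤ 2 * ε * ‖v‖ ^ 2 := by
  have hu1 : Differentiable ℝ u := hu.differentiable (by norm_num)
  have hu2 : Differentiable ℝ (fun y => fderiv ℝ u y v) :=
    ((hu.fderiv_right (m := 1) (by norm_num)).differentiable (by norm_num)).clm_apply
      (differentiable_const v)
  have hq (y : F) : HasFDerivAt (fun y => ‖y - x₀‖ ^ 2) (2 • innerSL ℝ (y - x₀)) y := by
    simpa using ((hasFDerivAt_id y).sub_const x₀).norm_sq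
  have hDφ : (fun y => fderiv ℝ (fun y => u y - ε * ‖y - x₀‖ ^ 2) y v) =
      fun y => fderiv ℝ u y v - ε * (2 * inner ℝ (y - x₀) v) := funext fun y => by
    rw [((hu1 y).hasFDerivAt.fun_sub ((hq y).const_mul ε)).fderiv]; simp [inner_sub_left]
  have hD2 : HasFDerivAt (fun y => fderiv ℝ u y v - ε * (2 * inner ℝ (y - x₀) v)) _ z :=
    (hu2 z).hasFDerivAt.sub <|
      ((((hasFDerivAt_id z).sub_const x₀).inner ℝ (hasFDerivAt_const v z)).const_mul 2).const_mul ε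
  have hnonpos := h.fderiv_fderiv_apply_nonpos v
    (hu1.sub fun y => ((hq y).const_mul ε).differentiableAt)
    (by rw [hDφ]; exact hD2.differentiableAt)
  rw [hDφ, hD2.fderiv] at hnonpos
  simp only [sub_apply, smul_apply, ContinuousLinearMap.comp_apply, ContinuousLinearMap.prod_apply,
    ContinuousLinearMap.id_apply, zero_apply, fderivInnerCLM_apply, inner_zero_right,
    real_inner_self_eq_norm_sq, zero_add, smul_eq_mul, id_eq] at hnonpos
  linarith

theorem EuclideanSpace.sum_fderiv_fderiv_single_le {d : ℕ} {u : EuclideanSpace ℝ (Fin d) → ℝ}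
    (hu : ContDiff ℝ 2 u) {ε : ℝ} {x₀ z : EuclideanSpace ℝ (Fin d)}
    (h : IsLocalMax (fun y => u y - ε * ‖y - x₀‖ ^ 2) z) :
    ∑ i, fderiv ℝ (fun y => fderiv ℝ u y (EuclideanSpace.single i (1 : ℝ))) z
      (EuclideanSpace.single i (1 : ℝ)) ≤ 2 * d * ε :=
  calc _ ≤ ∑ _i : Fin d, 2 * ε := Finset.sum_le_sum fun i _ => by
          simpa using h.fderiv_fderiv_apply_le hu (EuclideanSpace.single i (1 : ℝ))
    _ = 2 * d * ε := by simp [mul_assoc, mul_left_comm]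

theorem trapped_stationary_solution_is_zero_general (d : ℕ) (μ δ₀ : ℝ) (hμ : 0 < μ)
    (f : ℝ → ℝ) (hf : ContDiff ℝ 1 f) (hf0 : f 0 = 0)
    (hf' : ∀ s ∈ Set.Icc (0 : ℝ) δ₀, deriv f s ≤ -μ)
    (u : EuclideanSpace ℝ (Fin d) → ℝ) (hu : ContDiff ℝ 2 u)
    (hbd : ∀ x, u x ∈ Set.Icc (0 : ℝ) δ₀)
    (heq : ∀ x, (∑ i, fderiv ℝ (fun y => fderiv ℝ u y (EuclideanSpace.single i (1 : ℝ))) x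
        (EuclideanSpace.single i (1 : ℝ))) + f (u x) = 0) :
    ∀ x, u x = 0 := by
  have hf_le : ∀ s ∈ Icc 0 δ₀, f s ≤ -μ * s := fun s hs => by
    simpa [hf0] using (convex_Icc 0 δ₀).image_sub_le_mul_sub_of_deriv_le
      hf.continuous.continuousOn (hf.differentiable one_ne_zero).differentiableOn
      (fun x hx => hf' x (interior_subset hx)) 0 ⟨le_rfl, hs.1.trans hs.2⟩ s hs hs.1
  intro x₀
  have key : ∀ ε > 0, μ * u x₀ ≤ 2 * d * ε := fun ε hε => by
    obtain ⟨z, hz⟩ := exists_forall_sub_mul_dist_sq_le hu.continuous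
      ⟨δ₀, forall_mem_range.2 fun x => (hbd x).2⟩ hε x₀
    simp only [dist_eq_norm] at hz
    have hΔ := EuclideanSpace.sum_fderiv_fderiv_single_le hu (Eventually.of_forall hz)
    have hx₀z : u x₀ ≤ u z := by simpa using (hz x₀).trans (sub_le_self _ (by positivity))
    calc μ * u x₀ ≤ μ * u z := mul_le_mul_of_nonneg_left hx₀z hμ.le
      _ ≤ -f (u z) := by linarith [hf_le _ (hbd z)]
      _ ≤ 2 * d * ε := by linarith [heq z]
  have hlim : Tendsto (fun ε : ℝ => 2 * d * ε) (𝓝[>] 0) (𝓝 0) :=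
    ((continuous_const_mul _).tendsto' 0 0 (mul_zero _)).mono_left nhdsWithin_le_nhds
  have hμu : μ * u x₀ ≤ 0 := ge_of_tendsto hlim (eventually_nhdsWithin_of_forall key)
  exact le_antisymm (nonpos_of_mul_nonpos_right hμu hμ) (hbd x₀).1

/-- If `f(0) = 0`, `f' ≤ -μ < 0` on `[0, δ₀]`, and `u` is a bounded `C²` solution of
`Δu + f(u) = 0` on `ℝ^d` with `0 ≤ u ≤ δ₀`, then `u ≡ 0`. -/
theorem trapped_stationary_solution_is_zero (d : ℕ) (μ δ₀ : ℝ) (hμ : 0 < μ) (hδ : 0 < δ₀)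
    (f : ℝ → ℝ) (hf : ContDiff ℝ 1 f) (hf0 : f 0 = 0)
    (hf' : ∀ s ∈ Set.Icc (0 : ℝ) δ₀, deriv f s ≤ -μ)
    (u : EuclideanSpace ℝ (Fin d) → ℝ) (hu : ContDiff ℝ 2 u)
    (hbd : ∀ x, u x ∈ Set.Icc (0 : ℝ) δ₀)
    (heq : ∀ x, (∑ i, fderiv ℝ (fun y => fderiv ℝ u y (EuclideanSpace.single i (1 : ℝ))) x
        (EuclideanSpace.single i (1 : ℝ))) + f (u x) = 0) :
    ∀ x, u x = 0 :=
  trapped_stationary_solution_is_zero_general d μ δ₀ hμ f hf hf0 hf' u hu hbd heq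
end
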